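/- Let 0 < α ≤ 1 and consider an instance of the FSSP with two agents and separate item sets in which every item weight is at most α. Then every proportional fair solution x_PF satisfies: z* − z(x_PF) ≤ (1/2) · z* if α ≥ 1/2, and z* − z(x_PF) ≤ α · z* if α < 1/2. -/
import Mathlib


/-! Definitions for the Fair Subset Sum Problem (FSSP) with two agents `A` and `B`
owning separate item sets with weights `a : Fin n → ℝ` and `b : Fin m → ℝ`.
A solution is a pair of index subsets; feasibility means the total selected
weight does not exceed the capacity `1`. -/

/-- Total weight of the items of `S`. -/
noncomputable def sumw {n : ℕ} (a : Fin n → ℝ) (S : Finset (Fin n)) : ℝ := ∑ i ∈ S, a i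

/-- A feasible solution of FSSP with separate item sets. -/
def Feas {n m : ℕ} (a : Fin n → ℝ) (b : Fin m → ℝ)
    (x : Finset (Fin n) × Finset (Fin m)) : Prop :=
  sumw a x.1 + sumw b x.2 ≤ 1

/-- Social utility `z(x) = a(x) + b(x)`. -/
noncomputable def zv {n m : ℕ} (a : Fin n → ℝ) (b : Fin m → ℝ)
    (x : Finset (Fin n) × Finset (Fin m)) : ℝ :=
  sumw a x.1 + sumw b x.2

/-- Pareto efficient feasible solution. -/
def Pareto {n m : ℕ} (a : Fin n → ℝ) (b : Fin m → ℝ)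
    (x : Finset (Fin n) × Finset (Fin m)) : Prop :=
  Feas a b x ∧ ¬ ∃ y, Feas a b y ∧ sumw a x.1 ≤ sumw a y.1 ∧ sumw b x.2 ≤ sumw b y.2 ∧
    (sumw a x.1 < sumw a y.1 ∨ sumw b x.2 < sumw b y.2)

/-- System optimum: a feasible solution maximizing the social utility. -/
def SysOpt {n m : ℕ} (a : Fin n → ℝ) (b : Fin m → ℝ)
    (x : Finset (Fin n) × Finset (Fin m)) : Prop :=
  Feas a b x ∧ ∀ y, Feas a b y → zv a b y ≤ zv a b x

/-- Maximin fair solution: Pareto efficient and maximizing `min{a(x), b(x)}`. -/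
def Maximin {n m : ℕ} (a : Fin n → ℝ) (b : Fin m → ℝ)
    (x : Finset (Fin n) × Finset (Fin m)) : Prop :=
  Pareto a b x ∧ ∀ y, Feas a b y →
    min (sumw a y.1) (sumw b y.2) ≤ min (sumw a x.1) (sumw b x.2)

/-- Proportional fair solution. -/
def PropFair {n m : ℕ} (a : Fin n → ℝ) (b : Fin m → ℝ)
    (x : Finset (Fin n) × Finset (Fin m)) : Prop :=
  Feas a b x ∧ 0 < sumw a x.1 ∧ 0 < sumw b x.2 ∧
    ∀ y, Feas a b y → sumw a y.1 / sumw a x.1 + sumw b y.2 / sumw b x.2 ≤ 2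

/-- Kalai–Smorodinski fair solution: Pareto efficient and maximizing
`min{a(x)/â, b(x)/b̂}`, where `â` and `b̂` are the (positive) maximal utilities
each agent can obtain over all feasible solutions. -/
def KSFair {n m : ℕ} (a : Fin n → ℝ) (b : Fin m → ℝ)
    (x : Finset (Fin n) × Finset (Fin m)) : Prop :=
  Pareto a b x ∧ ∃ ahat bhat : ℝ, 0 < ahat ∧ 0 < bhat ∧
    IsGreatest {v | ∃ y, Feas a b y ∧ sumw a y.1 = v} ahat ∧
    IsGreatest {v | ∃ y, Feas a b y ∧ sumw b y.2 = v} bhat ∧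
    ∀ y, Feas a b y →
      min (sumw a y.1 / ahat) (sumw b y.2 / bhat) ≤
        min (sumw a x.1 / ahat) (sumw b x.2 / bhat)

/-- A valid FSSP instance with separate item sets in which every item weight is
nonnegative and at most `α`, and the total weight exceeds the capacity `1`. -/
def ValidInst {n m : ℕ} (a : Fin n → ℝ) (b : Fin m → ℝ) (α : ℝ) : Prop :=
  (∀ i, 0 ≤ a i) ∧ (∀ i, 0 ≤ b i) ∧ (∀ i, a i ≤ α) ∧ (∀ i, b i ≤ α) ∧
    1 < (∑ i, a i) + (∑ i, b i)

/-- For an FSSP instance with separate item sets and item weights at most `α`,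
every proportional fair solution satisfies `z* - z(x_PF) ≤ (1/2) · z*` when
`α ≥ 1/2`, and `z* - z(x_PF) ≤ α · z*` when `α < 1/2`. -/
theorem pof_propfair (α : ℝ) (hα0 : 0 < α) (hα1 : α ≤ 1)
    {n m : ℕ} (a : Fin n → ℝ) (b : Fin m → ℝ) (hinst : ValidInst a b α)
    (xopt : Finset (Fin n) × Finset (Fin m)) (hopt : SysOpt a b xopt)
    (xPF : Finset (Fin n) × Finset (Fin m)) (hPF : PropFair a b xPF) :
    (1/2 ≤ α → zv a b xopt - zv a b xPF ≤ (1/2) * zv a b xopt) ∧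
    (α < 1/2 → zv a b xopt - zv a b xPF ≤ α * zv a b xopt) := by
  obtain ⟨ha0, hb0, haα, hbα, htot⟩ := hinst
  obtain ⟨hfeas, hp, hq, hPFy⟩ := hPF
  obtain ⟨hfopt, hmax⟩ := hopt
  set p := sumw a xPF.1 with hpdef
  set q := sumw b xPF.2 with hqdef
  have hA0 : 0 ≤ sumw a xopt.1 := Finset.sum_nonneg fun i _ => ha0 i
  have hB0 : 0 ≤ sumw b xopt.2 := Finset.sum_nonneg fun i _ => hb0 i
  have hPFopt := hPFy xopt hfopt
  have hBq : 0 ≤ sumw b xopt.2 / q := div_nonneg hB0 hq.le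
  have hAp : 0 ≤ sumw a xopt.1 / p := div_nonneg hA0 hp.le
  have hA2 : sumw a xopt.1 ≤ 2 * p := by
    have h2 : sumw a xopt.1 / p ≤ 2 := by linarith
    exact (div_le_iff₀ hp).mp h2
  have hB2 : sumw b xopt.2 ≤ 2 * q := by
    have h2 : sumw b xopt.2 / q ≤ 2 := by linarith
    exact (div_le_iff₀ hq).mp h2
  -- key claim: p + q > 1 - α
  have hsa := Finset.sum_add_sum_compl xPF.1 a
  have hsb := Finset.sum_add_sum_compl xPF.2 b
  have hcomp : 0 < ∑ i ∈ xPF.1ᶜ, a i + ∑ i ∈ xPF.2ᶜ, b i := by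
    have : p + q ≤ 1 := hfeas
    simp only [hpdef, hqdef, sumw] at this
    linarith
  have hkey : 1 - α < p + q := by
    by_contra hcon
    push_neg at hcon
    rcases lt_or_ge 0 (∑ i ∈ xPF.1ᶜ, a i) with hca | hca
    · have h0 : ∑ i ∈ xPF.1ᶜ, (0:ℝ) < ∑ i ∈ xPF.1ᶜ, a i := by simpa using hca
      obtain ⟨i, hi, hia⟩ := Finset.exists_lt_of_sum_lt h0
      have hni : i ∉ xPF.1 := by simpa using hi
      have hins : sumw a (insert i xPF.1) = a i + p := Finset.sum_insert hni
      have hyfeas : Feas a b (insert i xPF.1, xPF.2) := by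
        show sumw a (insert i xPF.1) + sumw b xPF.2 ≤ 1
        rw [hins]
        have := haα i
        linarith
      have h2 := hPFy (insert i xPF.1, xPF.2) hyfeas
      simp only at h2
      rw [hins] at h2
      rw [div_self hq.ne', add_div, div_self hp.ne'] at h2
      have : 0 < a i / p := div_pos hia hp
      linarith
    · have hcb : 0 < ∑ i ∈ xPF.2ᶜ, b i := by linarith
      have h0 : ∑ i ∈ xPF.2ᶜ, (0:ℝ) < ∑ i ∈ xPF.2ᶜ, b i := by simpa using hcb
      obtain ⟨i, hi, hib⟩ := Finset.exists_lt_of_sum_lt h0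
      have hni : i ∉ xPF.2 := by simpa using hi
      have hins : sumw b (insert i xPF.2) = b i + q := Finset.sum_insert hni
      have hyfeas : Feas a b (xPF.1, insert i xPF.2) := by
        show sumw a xPF.1 + sumw b (insert i xPF.2) ≤ 1
        rw [hins]
        have := hbα i
        linarith
      have h2 := hPFy (xPF.1, insert i xPF.2) hyfeas
      simp only at h2
      rw [hins] at h2
      rw [div_self hp.ne', add_div, div_self hq.ne'] at h2
      have : 0 < b i / q := div_pos hib hq
      linarith
  have hz1 : zv a b xopt ≤ 1 := hfopt
  have hzeq : zv a b xopt = sumw a xopt.1 + sumw b xopt.2 := rfl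
  have hzPF : zv a b xPF = p + q := rfl
  constructor
  · intro _
    rw [hzeq, hzPF]
    linarith
  · intro _
    rw [hzeq, hzPF]
    rw [hzeq] at hz1
    nlinarith [mul_nonneg (sub_nonneg.mpr hz1) (sub_nonneg.mpr hα1)]
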